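/- Fix an integer K ≥ 2 and reals λ_1, …, λ_d > 0. Define Δ(x) = (1/(K−1))∑_{i>j} x_i x_j − (1/(K+1))∑_{i≥j} x_i x_j on ℝ^d. Let 𝒞 ⊆ {1,…,d} with c = |𝒞| and K + c − d > 0, and let H_𝒞 = {x : x_i = √λ_i for i ∈ 𝒞}. Then the restriction of Δ to H_𝒞 has a unique stationary point, given by x_j = (∑_{i∈𝒞} √λ_i)/(K + c − d) for all j ∉ 𝒞, and the value of Δ there equals K/((K²−1)(K+c−d)) · [ (∑_{i∈𝒞} √λ_i)² − (K+c−d)∑_{i∈𝒞} λ_i ]. -/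

import Mathlib

/-!
Writing `S = ∑ xᵢ`, the two triangular sums are `(S² ∓ ∑ xᵢ²) / 2`, so
`Δ(x) = (S² - K ∑ xᵢ²) / (K² - 1)` and `∂Δ/∂xⱼ = 2 (S - K xⱼ) / (K² - 1)`.
Hence a point of `H_𝒞` is stationary iff every free coordinate equals `S / K`; summing over the
free coordinates, `S = ∑_{i∈𝒞} √λᵢ + (d - c) S / K`, which pins down
`S / K = (∑_{i∈𝒞} √λᵢ) / (K + c - d)`.
-/

open Finset

section Ordered

variable {ι : Type*} [Fintype ι] [LinearOrder ι]

theorem sum_filter_lt_add_add_sum_filter_gt {M : Type*} [AddCommMonoid M] (f : ι → M) (i : ι) :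
    ∑ j ∈ univ.filter (· < i), f j + f i + ∑ j ∈ univ.filter (i < ·), f j = ∑ j, f j := by
  rw [sum_filter, sum_filter, ← Fintype.sum_ite_eq' i f, ← sum_add_distrib, ← sum_add_distrib]
  refine sum_congr rfl fun j _ => ?_
  rcases lt_trichotomy j i with h | rfl | h
  · simp [h, h.ne, h.not_gt]
  · simp
  · simp [h, h.ne', h.not_gt]

theorem sum_filter_le_eq_sum_filter_lt_add {M : Type*} [AddCommMonoid M] (f : ι → M) (i : ι) :
    ∑ j ∈ univ.filter (· ≤ i), f j = ∑ j ∈ univ.filter (· < i), f j + f i := by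
  rw [sum_filter, sum_filter, ← Fintype.sum_ite_eq' i f, ← sum_add_distrib]
  refine sum_congr rfl fun j _ => ?_
  rcases lt_trichotomy j i with h | rfl | h
  · simp [h, h.le, h.ne]
  · simp
  · simp [h.not_ge, h.not_gt, h.ne']

theorem two_mul_sum_filter_lt_mul {R : Type*} [CommRing R] (x : ι → R) :
    2 * ∑ i, ∑ j ∈ univ.filter (· < i), x i * x j = (∑ i, x i) ^ 2 - ∑ i, x i ^ 2 := by
  have hswap : ∑ i, ∑ j ∈ univ.filter (· < i), x i * x j
      = ∑ i, ∑ j ∈ univ.filter (i < ·), x i * x j := by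
    rw [sum_comm' (t' := univ) (s' := fun j => univ.filter (j < ·)) (fun _ _ => by simp)]
    simp_rw [mul_comm]
  rw [sq, sum_mul_sum,
    sum_congr rfl fun i _ => (sum_filter_lt_add_add_sum_filter_gt (fun j => x i * x j) i).symm,
    sum_add_distrib, sum_add_distrib, ← hswap]
  simp only [← sq]
  ring

theorem two_mul_sum_filter_le_mul {R : Type*} [CommRing R] (x : ι → R) :
    2 * ∑ i, ∑ j ∈ univ.filter (· ≤ i), x i * x j = (∑ i, x i) ^ 2 + ∑ i, x i ^ 2 := by
  rw [sum_congr rfl fun i _ => sum_filter_le_eq_sum_filter_lt_add (fun j => x i * x j) i,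
    sum_add_distrib, mul_add, two_mul_sum_filter_lt_mul]
  simp only [← sq]
  ring

theorem one_div_mul_sum_filter_lt_sub_one_div_mul_sum_filter_le {K : ℝ} (hK₁ : K - 1 ≠ 0)
    (hK₂ : K + 1 ≠ 0) (x : ι → ℝ) :
    1 / (K - 1) * ∑ i, ∑ j ∈ univ.filter (· < i), x i * x j
      - 1 / (K + 1) * ∑ i, ∑ j ∈ univ.filter (· ≤ i), x i * x j
      = (K ^ 2 - 1)⁻¹ * ((∑ i, x i) ^ 2 - K * ∑ i, x i ^ 2) := by
  have hlt : ∑ i, ∑ j ∈ univ.filter (· < i), x i * x j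
      = ((∑ i, x i) ^ 2 - ∑ i, x i ^ 2) / 2 := by
    linear_combination two_mul_sum_filter_lt_mul x / 2
  have hle : ∑ i, ∑ j ∈ univ.filter (· ≤ i), x i * x j
      = ((∑ i, x i) ^ 2 + ∑ i, x i ^ 2) / 2 := by
    linear_combination two_mul_sum_filter_le_mul x / 2
  have hK : K ^ 2 - 1 ≠ 0 := by
    rw [show K ^ 2 - 1 = (K - 1) * (K + 1) by ring]
    exact mul_ne_zero hK₁ hK₂
  rw [hlt, hle]
  field_simp
  ring

end Ordered

variable {ι : Type*} [Fintype ι]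

theorem fderiv_sq_sum_sub_mul_sum_sq_single [DecidableEq ι] (a K : ℝ) (x : ι → ℝ) (j : ι) :
    fderiv ℝ (fun y : ι → ℝ => a * ((∑ i, y i) ^ 2 - K * ∑ i, y i ^ 2)) x (Pi.single j 1)
      = a * (2 * (∑ i, x i - K * x j)) := by
  have hcoord (i : ι) : HasFDerivAt (fun y : ι → ℝ => y i)
      (ContinuousLinearMap.proj (R := ℝ) (φ := fun _ : ι => ℝ) i) x :=
    hasFDerivAt_apply i x
  have hsum : HasFDerivAt (fun y : ι → ℝ => ∑ i, y i) _ x :=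
    HasFDerivAt.fun_sum fun i _ => hcoord i
  have hsq : HasFDerivAt (fun y : ι → ℝ => ∑ i, y i ^ 2) _ x :=
    HasFDerivAt.fun_sum fun i _ => (hcoord i).pow 2
  rw [(((hsum.pow 2).fun_sub (hsq.const_mul K)).const_mul a).fderiv]
  simp only [Nat.add_one_sub_one, pow_one, nsmul_eq_mul, Nat.cast_ofNat,
    smul_apply, sub_apply, _root_.sum_apply, ContinuousLinearMap.proj_apply, Pi.single_apply,
    sum_ite_eq', mem_univ, if_true, smul_eq_mul, mul_one, mul_ite, mul_zero]
  ring

theorem sum_eq_sum_add_of_eq_on_compl {R : Type*} [CommRing R] [DecidableEq ι] (C : Finset ι)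
    {x : ι → R} {t : R} (h : ∀ j ∉ C, x j = t) :
    ∑ i, x i = ∑ i ∈ C, x i + (Fintype.card ι - #C) * t := by
  rw [← sum_add_sum_compl C x, sum_congr rfl fun j hj => h j (mem_compl.mp hj), sum_const,
    card_compl, nsmul_eq_mul, Nat.cast_sub (card_le_univ C)]

theorem sum_div_eq_iff_eq_div [DecidableEq ι] {K : ℝ} (hK : K ≠ 0) (C : Finset ι)
    (hm : K + #C - Fintype.card ι ≠ 0) {x : ι → ℝ} {t : ℝ} (h : ∀ j ∉ C, x j = t) :
    (∑ i, x i) / K = t ↔ t = (∑ i ∈ C, x i) / (K + #C - Fintype.card ι) := by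
  rw [sum_eq_sum_add_of_eq_on_compl C h, div_eq_iff hK, eq_div_iff hm]
  constructor <;> intro h' <;> linarith

theorem forall_eq_sum_div_iff_forall_eq_div [DecidableEq ι] {K : ℝ} (hK : K ≠ 0)
    (C : Finset ι) (hm : K + #C - Fintype.card ι ≠ 0) (x : ι → ℝ) :
    (∀ j ∉ C, x j = (∑ i, x i) / K) ↔
      ∀ j ∉ C, x j = (∑ i ∈ C, x i) / (K + #C - Fintype.card ι) := by
  constructor
  · intro h j hj
    rw [h j hj]
    exact (sum_div_eq_iff_eq_div hK C hm h).mp rfl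
  · intro h j hj
    rw [h j hj]
    exact ((sum_div_eq_iff_eq_div hK C hm h).mpr rfl).symm

theorem sq_sum_sub_mul_sum_sq_of_eq_on_compl [DecidableEq ι] (K : ℝ) (C : Finset ι)
    (hm : K + #C - Fintype.card ι ≠ 0) {x : ι → ℝ}
    (h : ∀ j ∉ C, x j = (∑ i ∈ C, x i) / (K + #C - Fintype.card ι)) :
    (∑ i, x i) ^ 2 - K * ∑ i, x i ^ 2
      = K / (K + #C - Fintype.card ι) *
        ((∑ i ∈ C, x i) ^ 2 - (K + #C - Fintype.card ι) * ∑ i ∈ C, x i ^ 2) := by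
  rw [sum_eq_sum_add_of_eq_on_compl C h,
    sum_eq_sum_add_of_eq_on_compl (x := fun i => x i ^ 2) C fun j hj => by rw [h j hj]]
  field_simp
  ring

/-- On the hyperplane `H_𝒞 = {x : x_i = √λ_i for i ∈ 𝒞}`, the function
`Δ(x) = (1/(K−1))∑_{i>j} x_i x_j − (1/(K+1))∑_{i≥j} x_i x_j` has a unique stationary
point, given by `x_j = (∑_{i∈𝒞}√λ_i)/(K+c−d)` for `j ∉ 𝒞`, where its value is
`K/((K²−1)(K+c−d))·[(∑_{i∈𝒞}√λ_i)² − (K+c−d)∑_{i∈𝒞}λ_i]`. -/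
theorem stmt18 (d K : ℕ) (hK : 2 ≤ K) (lam : Fin d → ℝ) (hpos : ∀ i, 0 < lam i)
    (C : Finset (Fin d)) (c : ℕ) (hc : C.card = c) (hKcd : 0 < (K:ℝ) + c - d)
    (Δ : (Fin d → ℝ) → ℝ)
    (hΔ : ∀ x : Fin d → ℝ,
      Δ x = (1/((K:ℝ)-1)) * ∑ i, ∑ j ∈ Finset.univ.filter (fun j => j < i), x i * x j
          - (1/((K:ℝ)+1)) * ∑ i, ∑ j ∈ Finset.univ.filter (fun j => j ≤ i), x i * x j)
    (x : Fin d → ℝ) (hx : ∀ i ∈ C, x i = Real.sqrt (lam i)) :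
    ((∀ j ∉ C, fderiv ℝ Δ x (Pi.single j 1) = 0) ↔
      (∀ j ∉ C, x j = (∑ i ∈ C, Real.sqrt (lam i)) / ((K:ℝ) + c - d))) ∧
    ((∀ j ∉ C, x j = (∑ i ∈ C, Real.sqrt (lam i)) / ((K:ℝ) + c - d)) →
      Δ x = (K:ℝ) / (((K:ℝ)^2 - 1) * ((K:ℝ) + c - d)) *
        ((∑ i ∈ C, Real.sqrt (lam i))^2 - ((K:ℝ) + c - d) * ∑ i ∈ C, lam i)) := by
  subst hc
  have hK' : (2 : ℝ) ≤ K := by exact_mod_cast hK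
  have hK₀ : (K : ℝ) ≠ 0 := by linarith
  have hK₁ : (K : ℝ) - 1 ≠ 0 := by linarith
  have hK₂ : (K : ℝ) + 1 ≠ 0 := by linarith
  have hKsq : (K : ℝ) ^ 2 - 1 ≠ 0 := by nlinarith
  have hm : (K : ℝ) + #C - Fintype.card (Fin d) ≠ 0 := by
    rw [Fintype.card_fin]
    exact hKcd.ne'
  have hΔ' (y : Fin d → ℝ) :
      Δ y = ((K : ℝ) ^ 2 - 1)⁻¹ * ((∑ i, y i) ^ 2 - K * ∑ i, y i ^ 2) :=
    (hΔ y).trans (one_div_mul_sum_filter_lt_sub_one_div_mul_sum_filter_le hK₁ hK₂ y)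
  have hstationary (j : Fin d) :
      fderiv ℝ Δ x (Pi.single j 1) = 0 ↔ x j = (∑ i, x i) / K := by
    rw [funext hΔ', fderiv_sq_sum_sub_mul_sum_sq_single, mul_eq_zero, inv_eq_zero,
      or_iff_right hKsq, mul_eq_zero, or_iff_right two_ne_zero, sub_eq_zero, eq_div_iff hK₀,
      mul_comm, eq_comm]
  have hT : ∑ i ∈ C, x i = ∑ i ∈ C, √(lam i) := sum_congr rfl hx
  have hQ : ∑ i ∈ C, x i ^ 2 = ∑ i ∈ C, lam i :=
    sum_congr rfl fun i hi => by rw [hx i hi, Real.sq_sqrt (hpos i).le]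
  have hcrit := forall_eq_sum_div_iff_forall_eq_div hK₀ C hm x
  rw [Fintype.card_fin, hT] at hcrit
  refine ⟨by simpa only [hstationary] using hcrit, fun h => ?_⟩
  rw [hΔ', sq_sum_sub_mul_sum_sq_of_eq_on_compl K C hm (by rwa [Fintype.card_fin, hT]), hT, hQ,
    Fintype.card_fin]
  field_simp
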